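/- Let Φ : ℂⁿ → ℝ be a real-quadratic weight with positive definite Levi matrix L and pluriharmonic part matrix P, and let L^{1/2} denote the positive definite Hermitian square root of L. Define the 2n×2n block matrices W = [[I, 0], [−iP, I]], V = [[L^{−1/2}, 0], [0, (L^{1/2})ᵀ]], B₀ = (1/√2)·[[I, −iI], [−iI, I]], and set 𝐁 = W·V·B₀. Then 𝐀_Φ = conj(𝐁)·𝐁⁻¹, and the image 𝐁(ℝ^{2n}) of the real subspace ℝ^{2n} ⊆ ℂ^{2n} under 𝐁 equals Λ_Φ = {(y, −i(P y + conj(L)·conj(y))) : y ∈ ℂⁿ}. -/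
import Mathlib


open MeasureTheory Real Matrix
open scoped ENNReal ComplexOrder

noncomputable section

/-- Bilinear dot product on ℂⁿ. -/
def dotC {n : ℕ} (x y : Fin n → ℂ) : ℂ := ∑ j, x j * y j

/-- The real-quadratic weight Φ(x) = (1/2)(L x·x̄ + Re(P x·x)). -/
def weight {n : ℕ} (L P : Matrix (Fin n) (Fin n) ℂ) (x : Fin n → ℂ) : ℝ :=
  (1 / 2) * ((dotC (L.mulVec x) (star x)).re + (dotC (P.mulVec x) x).re)

/-- Squared H_Φ norm, valued in [0,∞]. -/
def HPhiNormSq {n : ℕ} (Φ : (Fin n → ℂ) → ℝ) (f : (Fin n → ℂ) → ℂ) : ℝ≥0∞ :=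
  ∫⁻ x, ENNReal.ofReal (‖f x‖ ^ 2 * Real.exp (-4 * π * Φ x))

/-- H_Φ norm, valued in [0,∞]. -/
def HPhiNorm {n : ℕ} (Φ : (Fin n → ℂ) → ℝ) (f : (Fin n → ℂ) → ℂ) : ℝ≥0∞ :=
  HPhiNormSq Φ f ^ (1 / 2 : ℝ)

/-- Entrywise complex conjugate of a matrix. -/
def conjM {m : Type*} (M : Matrix m m ℂ) : Matrix m m ℂ := M.map (starRingEnd ℂ)

/-- The matrix 𝐀_Φ associated with the weight with Levi matrix L and pluriharmonic part P. -/
def Amat {n : ℕ} (L P : Matrix (Fin n) (Fin n) ℂ) :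
    Matrix (Fin n ⊕ Fin n) (Fin n ⊕ Fin n) ℂ :=
  Matrix.fromBlocks (-(conjM L⁻¹ * P)) (Complex.I • conjM L⁻¹)
    (Complex.I • (L - conjM (P * L⁻¹) * P)) (-(conjM (P * L⁻¹)))

/-- Norm of the embedding H_{Φ₁} → H_{Φ₂}. -/
def embedNorm {n : ℕ} (Φ₁ Φ₂ : (Fin n → ℂ) → ℝ) : ℝ≥0∞ :=
  ⨆ f : {f : (Fin n → ℂ) → ℂ //
      Differentiable ℂ f ∧ 0 < HPhiNorm Φ₁ f ∧ HPhiNorm Φ₁ f ≠ ⊤},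
    HPhiNorm Φ₂ f.1 / HPhiNorm Φ₁ f.1

/-- The complex symplectic form on ℂ^{2n}. -/
def symp {n : ℕ} (X Y : Fin n ⊕ Fin n → ℂ) : ℂ :=
  ∑ j, X (Sum.inr j) * Y (Sum.inl j) - ∑ j, Y (Sum.inr j) * X (Sum.inl j)

/-- The phase-space shift S_Y. -/
def shiftOp {n : ℕ} (Y : (Fin n → ℂ) × (Fin n → ℂ)) (f : (Fin n → ℂ) → ℂ)
    (x : Fin n → ℂ) : ℂ :=
  Complex.exp (2 * (π : ℂ) * Complex.I * (-(1 / 2) * dotC Y.1 Y.2 + dotC Y.2 x)) * f (x - Y.1)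


set_option linter.unusedSectionVars false
set_option maxHeartbeats 1000000

section ConjMHelpers

variable {m : Type*} [Fintype m] [DecidableEq m]

lemma conjM_mul (A B : Matrix m m ℂ) : conjM (A * B) = conjM A * conjM B :=
  Matrix.map_mul

lemma conjM_one : conjM (1 : Matrix m m ℂ) = 1 :=
  Matrix.map_one _ (map_zero _) (map_one _)

lemma conjM_smul (c : ℂ) (A : Matrix m m ℂ) : conjM (c • A) = star c • conjM A := by
  ext i j; simp [conjM]

lemma conjM_add (A B : Matrix m m ℂ) : conjM (A + B) = conjM A + conjM B := by
  ext i j; simp [conjM]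

lemma conjM_sub (A B : Matrix m m ℂ) : conjM (A - B) = conjM A - conjM B := by
  ext i j; simp [conjM]

lemma conjM_conjM (A : Matrix m m ℂ) : conjM (conjM A) = A := by
  ext i j; simp [conjM]

lemma conjM_fromBlocks {n : ℕ} (A B C D : Matrix (Fin n) (Fin n) ℂ) :
    conjM (Matrix.fromBlocks A B C D) =
      Matrix.fromBlocks (conjM A) (conjM B) (conjM C) (conjM D) :=
  Matrix.fromBlocks_map A B C D _

lemma conjM_mulVec (A : Matrix m m ℂ) (v : m → ℂ) :
    star (A *ᵥ v) = conjM A *ᵥ star v := by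
  rw [Matrix.star_mulVec]
  have h : (conjM A)ᵀ = Aᴴ := by
    ext i j; simp [conjM, Matrix.conjTranspose_apply]
  rw [← h, Matrix.vecMul_transpose]

lemma smul_sumElim {n : ℕ} (c : ℂ) (u v : Fin n → ℂ) :
    c • Sum.elim u v = Sum.elim (c • u) (c • v) := by
  funext i; cases i <;> simp

end ConjMHelpers


/-- 𝐀_Φ = conj(𝐁)𝐁⁻¹ and 𝐁(ℝ^{2n}) = Λ_Φ for the FBI–Bargmann
canonical transformation 𝐁 = W·V·B₀. -/
theorem Amat_from_Bargmann (n : ℕ) (L P : Matrix (Fin n) (Fin n) ℂ)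
    (hL : L.PosDef) (hP : P.IsSymm)
    (S : Matrix (Fin n) (Fin n) ℂ) (hS : S.PosDef) (hSL : S * S = L) :
    Amat L P =
        conjM (Matrix.fromBlocks 1 0 (-Complex.I • P) 1 *
            Matrix.fromBlocks S⁻¹ 0 0 Sᵀ *
            (((Real.sqrt 2)⁻¹ : ℂ) •
              Matrix.fromBlocks 1 (-Complex.I • (1 : Matrix (Fin n) (Fin n) ℂ))
                (-Complex.I • (1 : Matrix (Fin n) (Fin n) ℂ)) 1)) *
          (Matrix.fromBlocks 1 0 (-Complex.I • P) 1 *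
            Matrix.fromBlocks S⁻¹ 0 0 Sᵀ *
            (((Real.sqrt 2)⁻¹ : ℂ) •
              Matrix.fromBlocks 1 (-Complex.I • (1 : Matrix (Fin n) (Fin n) ℂ))
                (-Complex.I • (1 : Matrix (Fin n) (Fin n) ℂ)) 1))⁻¹ ∧
      Set.range (fun X : Fin n ⊕ Fin n → ℝ =>
          (Matrix.fromBlocks 1 0 (-Complex.I • P) 1 *
            Matrix.fromBlocks S⁻¹ 0 0 Sᵀ *
            (((Real.sqrt 2)⁻¹ : ℂ) •
              Matrix.fromBlocks 1 (-Complex.I • (1 : Matrix (Fin n) (Fin n) ℂ))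
                (-Complex.I • (1 : Matrix (Fin n) (Fin n) ℂ)) 1)).mulVec
            (fun j => (X j : ℂ))) =
        Set.range (fun y : Fin n → ℂ =>
          Sum.elim y (-Complex.I • (P.mulVec y + (conjM L).mulVec (star y)))) := by
  -- basic facts about S
  have hdS : IsUnit S.det := hS.det_pos.ne'.isUnit
  have hdT : IsUnit Sᵀ.det := by rwa [Matrix.det_transpose]
  have hdL : IsUnit L.det := hL.det_pos.ne'.isUnit
  have hSS : S⁻¹ * S = 1 := Matrix.nonsing_inv_mul S hdS
  have hSS' : S * S⁻¹ = 1 := Matrix.mul_nonsing_inv S hdS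
  have hTT : Sᵀ⁻¹ * Sᵀ = 1 := Matrix.nonsing_inv_mul _ hdT
  have hTT' : Sᵀ * Sᵀ⁻¹ = 1 := Matrix.mul_nonsing_inv _ hdT
  have hA1 : ∀ X : Matrix (Fin n) (Fin n) ℂ, S⁻¹ * (S * X) = X := fun X => by
    rw [← Matrix.mul_assoc, hSS, Matrix.one_mul]
  have hA2 : ∀ X : Matrix (Fin n) (Fin n) ℂ, S * (S⁻¹ * X) = X := fun X => by
    rw [← Matrix.mul_assoc, hSS', Matrix.one_mul]
  have hA3 : ∀ X : Matrix (Fin n) (Fin n) ℂ, Sᵀ⁻¹ * (Sᵀ * X) = X := fun X => by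
    rw [← Matrix.mul_assoc, hTT, Matrix.one_mul]
  have hA4 : ∀ X : Matrix (Fin n) (Fin n) ℂ, Sᵀ * (Sᵀ⁻¹ * X) = X := fun X => by
    rw [← Matrix.mul_assoc, hTT', Matrix.one_mul]
  have hcS : conjM S = Sᵀ := by
    ext i j
    simpa [conjM, Matrix.conjTranspose_apply] using congrFun (congrFun hS.isHermitian j) i
  have hcT : conjM Sᵀ = S := by
    rw [← hcS, conjM_conjM]
  have hcSi : conjM S⁻¹ = Sᵀ⁻¹ := by
    refine (Matrix.inv_eq_left_inv ?_).symm
    rw [← hcS, ← conjM_mul, hSS, conjM_one]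
  have hcL : conjM L = Sᵀ * Sᵀ := by rw [← hSL, conjM_mul, hcS]
  have hcLi : conjM L⁻¹ = Sᵀ⁻¹ * Sᵀ⁻¹ := by
    have h1 : conjM L⁻¹ * conjM L = 1 := by
      rw [← conjM_mul, Matrix.nonsing_inv_mul L hdL, conjM_one]
    rw [hcL] at h1
    have := (Matrix.inv_eq_left_inv h1).symm
    rw [this, Matrix.mul_inv_rev]
  -- abbreviations
  set c : ℂ := ((Real.sqrt 2)⁻¹ : ℂ) with hcdef
  set W : Matrix (Fin n ⊕ Fin n) (Fin n ⊕ Fin n) ℂ :=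
    Matrix.fromBlocks 1 0 (-Complex.I • P) 1 with hWdef
  set V : Matrix (Fin n ⊕ Fin n) (Fin n ⊕ Fin n) ℂ :=
    Matrix.fromBlocks S⁻¹ 0 0 Sᵀ with hVdef
  set B0 : Matrix (Fin n ⊕ Fin n) (Fin n ⊕ Fin n) ℂ :=
    Matrix.fromBlocks 1 (-Complex.I • (1 : Matrix (Fin n) (Fin n) ℂ))
      (-Complex.I • (1 : Matrix (Fin n) (Fin n) ℂ)) 1 with hB0def
  have hs2 : (Real.sqrt 2 : ℂ) * (Real.sqrt 2 : ℂ) = 2 := by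
    rw [← Complex.ofReal_mul, Real.mul_self_sqrt (by norm_num)]
    norm_num
  have hs2ne : (Real.sqrt 2 : ℂ) ≠ 0 := by
    simp only [ne_eq, Complex.ofReal_eq_zero]
    positivity
  have hcc : c * c = (2 : ℂ)⁻¹ := by
    rw [hcdef]
    push_cast
    rw [← mul_inv, hs2]
  have hstc : star c = c := by
    rw [hcdef]
    push_cast
    simp [Complex.star_def, map_inv₀, Complex.conj_ofReal]
  set Mb : Matrix (Fin n ⊕ Fin n) (Fin n ⊕ Fin n) ℂ :=
    Matrix.fromBlocks S⁻¹ (-Complex.I • S⁻¹)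
      (-Complex.I • (P * S⁻¹ + Sᵀ)) (Sᵀ - P * S⁻¹) with hMbdef
  set Nb : Matrix (Fin n ⊕ Fin n) (Fin n ⊕ Fin n) ℂ :=
    Matrix.fromBlocks (S - Sᵀ⁻¹ * P) (Complex.I • Sᵀ⁻¹)
      (Complex.I • (S + Sᵀ⁻¹ * P)) (Sᵀ⁻¹) with hNbdef
  have hM : W * V * (c • B0) = c • Mb := by
    rw [mul_smul_comm]
    congr 1
    rw [hWdef, hVdef, hB0def, hMbdef, Matrix.fromBlocks_multiply, Matrix.fromBlocks_multiply,
      Matrix.fromBlocks_inj]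
    refine ⟨?_, ?_, ?_, ?_⟩ <;>
      simp [mul_smul_comm, smul_mul_assoc, smul_smul, Complex.I_mul_I,
        smul_add, neg_smul, sub_eq_add_neg] <;> abel
  have hMN : Mb * Nb = (2 : ℂ) • (1 : Matrix (Fin n ⊕ Fin n) (Fin n ⊕ Fin n) ℂ) := by
    rw [show (1 : Matrix (Fin n ⊕ Fin n) (Fin n ⊕ Fin n) ℂ) =
        Matrix.fromBlocks 1 0 0 1 from Matrix.fromBlocks_one.symm,
      Matrix.fromBlocks_smul, hMbdef, hNbdef, Matrix.fromBlocks_multiply,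
      Matrix.fromBlocks_inj]
    refine ⟨?_, ?_, ?_, ?_⟩ <;>
      simp [mul_smul_comm, smul_mul_assoc, smul_smul, Complex.I_mul_I,
        Matrix.mul_add, Matrix.add_mul, Matrix.mul_sub, Matrix.sub_mul, Matrix.mul_assoc,
        hA1, hA2, hA3, hA4, hSS, hSS', hTT, hTT', smul_add, smul_sub, neg_smul, two_smul] <;>
      abel
  have hBinv : (W * V * (c • B0))⁻¹ = c • Nb := by
    apply Matrix.inv_eq_right_inv
    rw [hM, smul_mul_assoc, mul_smul_comm, smul_smul, hMN, smul_smul, hcc]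
    norm_num
  have hAMb : Amat L P * Mb = conjM Mb := by
    have hcMb : conjM Mb =
        Matrix.fromBlocks Sᵀ⁻¹ (Complex.I • Sᵀ⁻¹)
          (Complex.I • (conjM P * Sᵀ⁻¹ + S)) (S - conjM P * Sᵀ⁻¹) := by
      rw [hMbdef, conjM_fromBlocks, hcSi, conjM_smul, conjM_smul, conjM_add, conjM_mul,
        conjM_sub, conjM_mul, hcSi, hcT]
      simp
    rw [hcMb, hMbdef, Amat, hcLi, conjM_mul, hcLi, ← hSL, Matrix.fromBlocks_multiply,
      Matrix.fromBlocks_inj]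
    refine ⟨?_, ?_, ?_, ?_⟩ <;>
      simp [mul_smul_comm, smul_mul_assoc, smul_smul, Complex.I_mul_I,
        Matrix.mul_add, Matrix.add_mul, Matrix.mul_sub, Matrix.sub_mul, Matrix.neg_mul,
        Matrix.mul_neg, Matrix.mul_assoc,
        hA1, hA2, hA3, hA4, hSS, hSS', hTT, hTT', smul_add, smul_sub, neg_smul] <;>
      abel
  constructor
  · rw [hBinv, hM, conjM_smul, hstc, smul_mul_assoc, mul_smul_comm, smul_smul,
      ← hAMb, Matrix.mul_assoc, hMN, mul_smul_comm, Matrix.mul_one, smul_smul, hcc]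
    norm_num
  · -- the range statement
    set yv : (Fin n ⊕ Fin n → ℝ) → (Fin n → ℂ) := fun X =>
      c • S⁻¹ *ᵥ (fun j => ((X (Sum.inl j) : ℂ) - Complex.I * (X (Sum.inr j) : ℂ))) with hyv
    have key : ∀ X : Fin n ⊕ Fin n → ℝ,
        (W * V * (c • B0)) *ᵥ (fun j => (X j : ℂ)) =
          Sum.elim (yv X)
            (-Complex.I • (P *ᵥ (yv X) + conjM L *ᵥ (star (yv X)))) := by
      intro X
      set v₁ : Fin n → ℂ := fun j => (X (Sum.inl j) : ℂ) with hv1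
      set v₂ : Fin n → ℂ := fun j => (X (Sum.inr j) : ℂ) with hv2
      have hw : (fun j => ((X (Sum.inl j) : ℂ) - Complex.I * (X (Sum.inr j) : ℂ)))
          = v₁ - Complex.I • v₂ := by
        funext j; simp [hv1, hv2]
      have hyvX : yv X = c • S⁻¹ *ᵥ (v₁ - Complex.I • v₂) := by
        simp only [hyv]; rw [hw]
      have hsw : star (v₁ - Complex.I • v₂) = v₁ + Complex.I • v₂ := by
        funext j
        simp [hv1, hv2, Complex.conj_ofReal, sub_eq_add_neg]
      have hstar : star (yv X) = c • Sᵀ⁻¹ *ᵥ (v₁ + Complex.I • v₂) := by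
        rw [hyvX, star_smul, hstc, conjM_mulVec, hcSi, hsw]
      have hleft : c • (S⁻¹ *ᵥ v₁ + (-Complex.I • S⁻¹) *ᵥ v₂) = yv X := by
        rw [Matrix.smul_mulVec, hyvX, Matrix.mulVec_sub, Matrix.mulVec_smul,
          neg_smul, sub_eq_add_neg]
      have hright : c • ((-Complex.I • (P * S⁻¹ + Sᵀ)) *ᵥ v₁ + (Sᵀ - P * S⁻¹) *ᵥ v₂)
          = -Complex.I • (P *ᵥ (yv X) + conjM L *ᵥ (star (yv X))) := by
        rw [hstar, hyvX]
        rw [Matrix.mulVec_smul, Matrix.mulVec_mulVec, Matrix.mulVec_smul,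
          Matrix.mulVec_mulVec, hcL, Matrix.mul_assoc, hTT', Matrix.mul_one]
        simp only [Matrix.mulVec_add, Matrix.mulVec_sub, Matrix.mulVec_smul,
          Matrix.add_mulVec, Matrix.sub_mulVec, Matrix.smul_mulVec,
          Matrix.neg_mulVec, smul_neg, neg_neg, smul_add, smul_sub, smul_smul, neg_smul]
        match_scalars <;> simp [Complex.I_sq, Complex.I_mul_I] <;> ring_nf <;>
          simp [Complex.I_sq] <;> ring
      rw [hM, Matrix.smul_mulVec, hMbdef, Matrix.fromBlocks_mulVec]
      have hxl : ((fun j => (X j : ℂ)) ∘ Sum.inl) = v₁ := rfl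
      have hxr : ((fun j => (X j : ℂ)) ∘ Sum.inr) = v₂ := rfl
      rw [hxl, hxr, smul_sumElim, hleft, hright]
    ext Z
    simp only [Set.mem_range]
    constructor
    · rintro ⟨X, rfl⟩
      exact ⟨yv X, (key X).symm⟩
    · rintro ⟨y, rfl⟩
      refine ⟨Sum.elim (fun j => Real.sqrt 2 * ((S *ᵥ y) j).re)
        (fun j => -(Real.sqrt 2 * ((S *ᵥ y) j).im)), ?_⟩
      rw [key]
      have hy : yv (Sum.elim (fun j => Real.sqrt 2 * ((S *ᵥ y) j).re)
          (fun j => -(Real.sqrt 2 * ((S *ᵥ y) j).im))) = y := by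
        rw [hyv]
        simp only [Sum.elim_inl, Sum.elim_inr]
        have hww : (fun j => ((Real.sqrt 2 * ((S *ᵥ y) j).re : ℝ) : ℂ)
            - Complex.I * ((-(Real.sqrt 2 * ((S *ᵥ y) j).im) : ℝ) : ℂ))
            = (Real.sqrt 2 : ℂ) • (S *ᵥ y) := by
          funext j
          simp only [Pi.smul_apply, smul_eq_mul]
          conv_rhs => rw [← Complex.re_add_im ((S *ᵥ y) j)]
          push_cast
          ring
        rw [hww, Matrix.mulVec_smul, smul_smul, Matrix.mulVec_mulVec, hSS, Matrix.one_mulVec]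
        rw [hcdef]
        rw [inv_mul_cancel₀ hs2ne, one_smul]
      rw [hy]
  done


end
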